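/- arXiv:2105.00601 — 3 statements merged into one kernel-verified Lean document; each statement's English description precedes it below -/
import Mathlib

section
/- Let u : {-(r-1),…,2N} → ℝ (a discrete function on grid indices) and suppose u attains a strict maximum over all indices at some interior nonlocal-region index j* ∈ {1,…,N}, meaning u(j*) > u(j) for all j ≠ j*. Then the discrete nonlocal operator value L u(j*) := ∑_{k=1}^{r} [u(j*+k) − 2u(j*) + u(j*−k)]/(kΔx)² · ∫_{(k-1)Δx}^{kΔx} s² γ_δ(s) ds is strictly negative, provided γ_δ is nonnegative and ∫_0^δ s² γ_δ(s) ds > 0 with δ = rΔx and all indices j*±k lie in the grid. -/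
open MeasureTheory

lemma second_difference_neg {u : ℤ → ℝ} {j k : ℤ} {h : ℝ} (hh : 0 < h)
    (hplus : u (j + k) < u j) (hminus : u (j - k) < u j) :
    (u (j + k) - 2 * u j + u (j - k)) / h < 0 :=
  div_neg_of_neg_of_pos (by linarith) hh

lemma integral_sq_mul_nonneg {γ : ℝ → ℝ} (hγ : ∀ s, 0 ≤ γ s) {a b : ℝ} (hab : a ≤ b) :
    0 ≤ ∫ s in a..b, s ^ 2 * γ s :=
  intervalIntegral.integral_nonneg hab fun s _ => mul_nonneg (sq_nonneg s) (hγ s)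

theorem stmt_3_general (r N : ℕ) (Δx : ℝ) (γ : ℝ → ℝ) (u : ℤ → ℝ) (jstar : ℤ)
    (hrN : r ≤ N) (hΔx : 0 < Δx)
    (hγ : ∀ s, 0 ≤ γ s)
    (hj1 : 1 ≤ jstar) (hjN : jstar ≤ (N:ℤ))
    (hmax : ∀ j : ℤ, -((r:ℤ) - 1) ≤ j → j ≤ 2 * (N:ℤ) → j ≠ jstar → u j < u jstar)
    (hpos : ∃ k ∈ Finset.Icc 1 r,
      0 < ∫ s in (((k:ℝ) - 1) * Δx)..((k:ℝ) * Δx), s ^ 2 * γ s) :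
    ∑ k ∈ Finset.Icc 1 r,
        (u (jstar + (k:ℤ)) - 2 * u jstar + u (jstar - (k:ℤ))) / ((k:ℝ) * Δx) ^ 2 *
          ∫ s in (((k:ℝ) - 1) * Δx)..((k:ℝ) * Δx), s ^ 2 * γ s < 0 := by
  have hdiff : ∀ k ∈ Finset.Icc 1 r,
      (u (jstar + (k:ℤ)) - 2 * u jstar + u (jstar - (k:ℤ))) / ((k:ℝ) * Δx) ^ 2 < 0 := by
    intro k hk
    obtain ⟨hk1, hkr⟩ := Finset.mem_Icc.mp hk
    have hk : (0:ℝ) < k := by exact_mod_cast hk1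
    exact second_difference_neg (by positivity) (hmax _ (by omega) (by omega) (by omega))
      (hmax _ (by omega) (by omega) (by omega))
  have hweight : ∀ k ∈ Finset.Icc 1 r,
      0 ≤ ∫ s in (((k:ℝ) - 1) * Δx)..((k:ℝ) * Δx), s ^ 2 * γ s := fun k _ =>
    integral_sq_mul_nonneg hγ (by nlinarith)
  obtain ⟨k₀, hk₀, hk₀pos⟩ := hpos
  exact Finset.sum_neg' (fun k hk => mul_nonpos_of_nonpos_of_nonneg (hdiff k hk).le (hweight k hk))
    ⟨k₀, hk₀, mul_neg_of_neg_of_pos (hdiff k₀ hk₀) hk₀pos⟩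

theorem stmt_3 (r N : ℕ) (Δx : ℝ) (γ : ℝ → ℝ) (u : ℤ → ℝ) (jstar : ℤ)
    (hr : 0 < r) (hrN : r ≤ N) (hΔx : 0 < Δx)
    (hγ : ∀ s, 0 ≤ γ s)
    (hj1 : 1 ≤ jstar) (hjN : jstar ≤ (N:ℤ))
    (hmax : ∀ j : ℤ, -((r:ℤ) - 1) ≤ j → j ≤ 2 * (N:ℤ) → j ≠ jstar → u j < u jstar)
    (hpos : ∃ k ∈ Finset.Icc 1 r,
      0 < ∫ s in (((k:ℝ) - 1) * Δx)..((k:ℝ) * Δx), s ^ 2 * γ s) :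
    ∑ k ∈ Finset.Icc 1 r,
        (u (jstar + (k:ℤ)) - 2 * u jstar + u (jstar - (k:ℤ))) / ((k:ℝ) * Δx) ^ 2 *
          ∫ s in (((k:ℝ) - 1) * Δx)..((k:ℝ) * Δx), s ^ 2 * γ s < 0 :=
  stmt_3_general r N Δx γ u jstar hrN hΔx hγ hj1 hjN hmax hpos
end

section
/- The transitional-region quantity AA := (Δt/Δx²)[∑_{k=m+1}^{r} (1/(k-1)²) ∫_{(k-1)Δx}^{kΔx} s²γ_δ(s)ds + 2(∫_0^{x_i} s²γ_δ(s)ds + x_i ∫_{x_i}^{δ} sγ_δ(s)ds) + Δx ∫_{x_i}^{δ} sγ_δ(s)ds] satisfies AA ≤ 4(Δt/Δx²), for x_i = mΔx with 1 ≤ m ≤ r, δ = rΔx, and γ_δ nonnegative with ∫_0^δ s²γ_δ(s)ds = 1. In particular, AA ≤ 1 whenever Δt/Δx² ≤ 1/4. -/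
/-!
Write `F = s²γ` and `G = sγ`. On `[(k-1)Δx, kΔx]` with `k ≥ 2` the weight `1/(k-1)²` is at most
one, so the sum telescopes to at most `∫_{xᵢ}^δ F`; since `s ≥ xᵢ ≥ Δx` on `[xᵢ, δ]`, both
`xᵢ ∫_{xᵢ}^δ G` and `Δx ∫_{xᵢ}^δ G` are also at most `∫_{xᵢ}^δ F`. Each of the three groups of
terms is therefore bounded by `∫_0^δ F = 1`, the middle one counted twice.
-/

open MeasureTheory Finset

/-- At `k = 1` the left side is `1 / 0 = 0`. -/
lemma one_div_natCast_sub_one_sq_le_one (k : ℕ) : 1 / ((k : ℝ) - 1) ^ 2 ≤ 1 := by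
  rcases Nat.lt_trichotomy k 1 with hk | rfl | hk
  · simp [Nat.lt_one_iff.mp hk]
  · simp
  · have : (2 : ℝ) ≤ k := by exact_mod_cast hk
    rw [div_le_one (pow_pos (by linarith) 2)]
    nlinarith
lemma sum_integral_Icc_mesh {f : ℝ → ℝ} (h : ℝ) {m r : ℕ} (hmr : m ≤ r)
    (hf : IntervalIntegrable f volume (m * h) (r * h)) :
    ∑ k ∈ Icc (m + 1) r, ∫ s in ((k : ℝ) - 1) * h..k * h, f s = ∫ s in m * h..r * h, f s := by
  have hmesh : ∀ k : ℕ, k ∈ Icc m r → (k : ℝ) * h ∈ Set.uIcc (m * h : ℝ) (r * h) := by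
    intro k hk
    rw [← Set.image_mul_const_uIcc]
    refine Set.mem_image_of_mem _ ?_
    rw [Set.uIcc_of_le (by exact_mod_cast hmr)]
    exact ⟨by exact_mod_cast (mem_Icc.mp hk).1, by exact_mod_cast (mem_Icc.mp hk).2⟩
  rw [← Ico_add_one_right_eq_Icc, ← sum_Ico_add',
    ← intervalIntegral.sum_integral_adjacent_intervals_Ico (a := fun k : ℕ => (k : ℝ) * h) hmr]
  · refine sum_congr rfl fun k _ => ?_
    push_cast
    ring_nf
  · intro k hk
    have hk := Set.mem_Ico.mp hk
    refine hf.mono_set (Set.uIcc_subset_uIcc (hmesh k (mem_Icc.mpr ⟨hk.1, hk.2.le⟩)) ?_)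
    exact_mod_cast hmesh (k + 1) (mem_Icc.mpr ⟨by omega, hk.2⟩)

lemma mul_integral_mul_le_integral_sq_mul {γ : ℝ → ℝ} {a b : ℝ} (ha : 0 ≤ a) (hab : a ≤ b)
    (hγ : ∀ s ∈ Set.Icc a b, 0 ≤ γ s)
    (hfirst : IntervalIntegrable (fun s => s * γ s) volume a b)
    (hsecond : IntervalIntegrable (fun s => s ^ 2 * γ s) volume a b) :
    a * ∫ s in a..b, s * γ s ≤ ∫ s in a..b, s ^ 2 * γ s := by
  rw [← intervalIntegral.integral_const_mul]
  refine intervalIntegral.integral_mono_on hab (hfirst.const_mul a) hsecond fun s hs => ?_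
  calc a * (s * γ s) ≤ s * (s * γ s) :=
        mul_le_mul_of_nonneg_right hs.1 (mul_nonneg (ha.trans hs.1) (hγ s hs))
    _ = s ^ 2 * γ s := by ring

theorem stmt_7 (γ : ℝ → ℝ) (Δx Δt : ℝ) (r m : ℕ)
    (hΔx : 0 < Δx) (hΔt : 0 < Δt) (hm1 : 1 ≤ m) (hmr : m ≤ r)
    (hγ : ∀ s, 0 ≤ γ s)
    (hint1 : IntervalIntegrable (fun s => s ^ 2 * γ s) volume 0 ((r:ℝ) * Δx))
    (hint2 : IntervalIntegrable (fun s => s * γ s) volume 0 ((r:ℝ) * Δx))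
    (hnorm : (∫ s in (0:ℝ)..((r:ℝ) * Δx), s ^ 2 * γ s) = 1) :
    let xi := (m:ℝ) * Δx
    let δ := (r:ℝ) * Δx
    let AA := Δt / Δx ^ 2 *
      ((∑ k ∈ Finset.Icc (m + 1) r,
          (1 / ((k:ℝ) - 1) ^ 2) * ∫ s in (((k:ℝ) - 1) * Δx)..((k:ℝ) * Δx), s ^ 2 * γ s)
        + 2 * ((∫ s in (0:ℝ)..xi, s ^ 2 * γ s) + xi * ∫ s in xi..δ, s * γ s)
        + Δx * ∫ s in xi..δ, s * γ s)
    AA ≤ 4 * (Δt / Δx ^ 2) ∧ (Δt / Δx ^ 2 ≤ 1 / 4 → AA ≤ 1) := by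
  intro xi δ AA
  have hΔxi : Δx ≤ xi := le_mul_of_one_le_left hΔx.le (by exact_mod_cast hm1)
  have hxi0 : 0 ≤ xi := hΔx.le.trans hΔxi
  have hxiδ : xi ≤ δ := mul_le_mul_of_nonneg_right (by exact_mod_cast hmr) hΔx.le
  have hxi : xi ∈ Set.uIcc 0 δ := Set.mem_uIcc_of_le hxi0 hxiδ
  have hsq : ∀ s, 0 ≤ s ^ 2 * γ s := fun s => mul_nonneg (sq_nonneg s) (hγ s)
  have hsq_xiδ := hint1.mono_set (Set.uIcc_subset_uIcc hxi Set.right_mem_uIcc)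
  have hsplit : (∫ s in (0:ℝ)..xi, s ^ 2 * γ s) + ∫ s in xi..δ, s ^ 2 * γ s = 1 := by
    rw [← hnorm, intervalIntegral.integral_add_adjacent_intervals
      (hint1.mono_set (Set.uIcc_subset_uIcc Set.left_mem_uIcc hxi)) hsq_xiδ]
  have hinner_nonneg : 0 ≤ ∫ s in (0:ℝ)..xi, s ^ 2 * γ s :=
    intervalIntegral.integral_nonneg hxi0 fun s _ => hsq s
  have hfirst_nonneg : 0 ≤ ∫ s in xi..δ, s * γ s :=
    intervalIntegral.integral_nonneg hxiδ fun s hs =>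
      mul_nonneg (hxi0.trans hs.1) (hγ s)
  have hmoment : xi * ∫ s in xi..δ, s * γ s ≤ ∫ s in xi..δ, s ^ 2 * γ s :=
    mul_integral_mul_le_integral_sq_mul hxi0 hxiδ (fun s _ => hγ s)
      (hint2.mono_set (Set.uIcc_subset_uIcc hxi Set.right_mem_uIcc)) hsq_xiδ
  have hsum : (∑ k ∈ Finset.Icc (m + 1) r,
      (1 / ((k:ℝ) - 1) ^ 2) * ∫ s in (((k:ℝ) - 1) * Δx)..((k:ℝ) * Δx), s ^ 2 * γ s)
      ≤ ∫ s in xi..δ, s ^ 2 * γ s := by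
    rw [← sum_integral_Icc_mesh Δx hmr hsq_xiδ]
    exact Finset.sum_le_sum fun k _ => mul_le_of_le_one_left
      (intervalIntegral.integral_nonneg (by linarith) fun s _ => hsq s)
      (one_div_natCast_sub_one_sq_le_one k)
  have hAA : AA ≤ 4 * (Δt / Δx ^ 2) := by
    rw [mul_comm 4]
    refine mul_le_mul_of_nonneg_left ?_ (by positivity)
    linarith [mul_le_mul_of_nonneg_right hΔxi hfirst_nonneg]
  exact ⟨hAA, fun hcfl => hAA.trans (by linarith)⟩
end

section
/- Global error estimate from consistency plus discrete maximum principle: suppose the error e_i^n satisfies e_i^{n+1} = e_i^n + Δt(L e^n(i) + ε_i^n) with |ε_i^n| ≤ C(Δx² + Δt), e_i^0 = 0, e_i^n = 0 on boundary indices, and L satisfies the discrete maximum principle under the CFL condition Δt/Δx² ≤ 1/4. Then |e_i^n| ≤ (nΔt)·C(Δx² + Δt) for all interior i and 0 ≤ n ≤ N_T. -/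
/-!
Write `K = C (Δx² + Δt)` and `S = u + Δt L u` for one explicit Euler step. The maximum principle is
only assumed for whole evolutions, so it is first turned into two one-step facts at indices of
`Iin \ IB`: `L 1 ≤ 0`, and `S ≤ 0` whenever `u ≤ 0` on `Iin ∪ IB`. Both come from evolutions
whose values on `IB` are clamped to the bound; for the second one the evolution starts from `0`,
so that nothing is needed of `u` outside `Iin ∪ IB`. By linearity, `|u| ≤ c` on `Iin` and `u = 0`
on `IB` then give `|S| ≤ c`, and the error bound follows by induction on `n`, each step adding at
most `Δt K`.
-/

variable {ι : Type*}

def SatisfiesDMP (L : (ι → ℝ) → ι → ℝ) (Iin IB : Set ι) (Δt : ℝ) (NT : ℕ) : Prop :=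
  ∀ (v f : ℕ → ι → ℝ) (M : ℝ),
    (∀ n < NT, ∀ i ∈ Iin, v (n + 1) i = v n i + Δt * (L (v n) i + f n i)) →
    (∀ n < NT, ∀ i ∈ Iin, f n i ≤ 0) →
    (∀ i, v 0 i ≤ M) →
    (∀ n ≤ NT, ∀ i ∈ IB, v n i ≤ M) →
    ∀ n ≤ NT, ∀ i ∈ Iin, v n i ≤ M

open Classical in
noncomputable def clampedEuler (L : (ι → ℝ) → ι → ℝ) (IB : Set ι) (Δt M : ℝ) (w : ι → ℝ) :
    ℕ → ι → ℝ
  | 0 => w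
  | n + 1 => fun i =>
      let s := clampedEuler L IB Δt M w n i + Δt * L (clampedEuler L IB Δt M w n) i
      if i ∈ IB then min M s else s

section clampedEuler

variable {L : (ι → ℝ) → ι → ℝ} {IB : Set ι} {Δt M : ℝ} {w : ι → ℝ}

theorem clampedEuler_succ_le (n : ℕ) (i : ι) :
    clampedEuler L IB Δt M w (n + 1) i ≤
      clampedEuler L IB Δt M w n i + Δt * L (clampedEuler L IB Δt M w n) i := by
  simp only [clampedEuler]
  split_ifs
  exacts [min_le_right _ _, le_rfl]

theorem clampedEuler_succ_of_notMem (n : ℕ) {i : ι} (hi : i ∉ IB) :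
    clampedEuler L IB Δt M w (n + 1) i =
      clampedEuler L IB Δt M w n i + Δt * L (clampedEuler L IB Δt M w n) i := by
  simp only [clampedEuler, if_neg hi]

theorem clampedEuler_le_of_mem (hw : ∀ i ∈ IB, w i ≤ M) (n : ℕ) {i : ι} (hi : i ∈ IB) :
    clampedEuler L IB Δt M w n i ≤ M := by
  cases n with
  | zero => exact hw i hi
  | succ n =>
    simp only [clampedEuler, if_pos hi]
    exact min_le_left _ _

end clampedEuler

namespace SatisfiesDMP

variable {L : (ι → ℝ) → ι → ℝ} {Iin IB : Set ι} {Δt : ℝ} {NT : ℕ}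
  (hL : SatisfiesDMP L Iin IB Δt NT)
include hL

theorem le_of_subsolution (hΔt : 0 < Δt) {v : ℕ → ι → ℝ} {M : ℝ}
    (hsub : ∀ n < NT, ∀ i ∈ Iin, v (n + 1) i ≤ v n i + Δt * L (v n) i)
    (h0 : ∀ i, v 0 i ≤ M) (hB : ∀ n ≤ NT, ∀ i ∈ IB, v n i ≤ M) :
    ∀ n ≤ NT, ∀ i ∈ Iin, v n i ≤ M := by
  refine hL v (fun n i => (v (n + 1) i - v n i) / Δt - L (v n) i) M
    (fun n _ i _ => by field_simp; ring) (fun n hn i hi => ?_) h0 hB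
  have := hsub n hn i hi
  rw [sub_nonpos, div_le_iff₀ hΔt]
  linarith

theorem step_le_of_forall_le (hΔt : 0 < Δt) (hNT : 1 ≤ NT) {w : ι → ℝ} {M : ℝ} (hw : ∀ i, w i ≤ M)
    {j : ι} (hj : j ∈ Iin) (hjB : j ∉ IB) : w j + Δt * L w j ≤ M := by
  have h1 := hL.le_of_subsolution hΔt (fun n _ i _ => clampedEuler_succ_le n i) hw
    (fun n _ _ hi => clampedEuler_le_of_mem (fun i _ => hw i) n hi) 1 hNT j hj
  rw [clampedEuler_succ_of_notMem 0 hjB] at h1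
  exact h1

theorem apply_one_nonpos (hΔt : 0 < Δt) (hNT : 1 ≤ NT) {j : ι} (hj : j ∈ Iin) (hjB : j ∉ IB) :
    L (fun _ => 1) j ≤ 0 := by
  have := hL.step_le_of_forall_le hΔt hNT (w := fun _ => 1) (M := 1) (fun _ => le_rfl) hj hjB
  nlinarith

theorem step_nonpos_of_nonpos_on (hΔt : 0 < Δt) (hNT : 2 ≤ NT) (hL0 : L 0 = 0) {u : ι → ℝ}
    (hu : ∀ i ∈ Iin ∪ IB, u i ≤ 0) {j : ι} (hj : j ∈ Iin) (hjB : j ∉ IB) :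
    u j + Δt * L u j ≤ 0 := by
  let v : ℕ → ι → ℝ
    | 0 => 0
    | n + 1 => clampedEuler L IB Δt 0 u n
  have hsub : ∀ n < NT, ∀ i ∈ Iin, v (n + 1) i ≤ v n i + Δt * L (v n) i := by
    rintro (_ | n) _ i hi
    · show u i ≤ 0 + Δt * L 0 i
      simpa [hL0] using hu i (Or.inl hi)
    · exact clampedEuler_succ_le n i
  have hB : ∀ n ≤ NT, ∀ i ∈ IB, v n i ≤ 0 := by
    rintro (_ | n) _ i hi
    · exact le_rfl
    · exact clampedEuler_le_of_mem (fun i hi => hu i (Or.inr hi)) n hi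
  have h2 : clampedEuler L IB Δt 0 u 1 j ≤ 0 :=
    hL.le_of_subsolution hΔt hsub (fun _ => le_rfl) hB 2 hNT j hj
  rw [clampedEuler_succ_of_notMem 0 hjB] at h2
  exact h2

theorem step_le_of_le_on (hΔt : 0 < Δt) (hNT : 2 ≤ NT) (hlin : IsLinearMap ℝ L) {u : ι → ℝ}
    {c : ℝ} (hc : 0 ≤ c) (hu : ∀ i ∈ Iin ∪ IB, u i ≤ c) {j : ι} (hj : j ∈ Iin) (hjB : j ∉ IB) :
    u j + Δt * L u j ≤ c := by
  have hshift := hL.step_nonpos_of_nonpos_on hΔt hNT hlin.map_zero (u := u - c • fun _ => 1)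
    (fun i hi => by simpa using hu i hi) hj hjB
  rw [hlin.map_sub, hlin.map_smul] at hshift
  have hL1 := hL.apply_one_nonpos hΔt (by omega) hj hjB
  simp only [Pi.sub_apply, Pi.smul_apply, smul_eq_mul, mul_one] at hshift
  nlinarith [mul_nonneg hΔt.le (mul_nonneg hc (neg_nonneg.mpr hL1))]

theorem abs_step_le (hΔt : 0 < Δt) (hNT : 2 ≤ NT) (hlin : IsLinearMap ℝ L) {u : ι → ℝ}
    {c : ℝ} (hc : 0 ≤ c) (hu : ∀ i ∈ Iin, |u i| ≤ c) (huB : ∀ i ∈ IB, u i = 0) {j : ι}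
    (hj : j ∈ Iin) (hjB : j ∉ IB) : |u j + Δt * L u j| ≤ c := by
  have hbound : ∀ i ∈ Iin ∪ IB, |u i| ≤ c := by
    rintro i (hi | hi)
    exacts [hu i hi, by simpa [huB i hi] using hc]
  have hupper := hL.step_le_of_le_on hΔt hNT hlin hc (fun i hi => (abs_le.mp (hbound i hi)).2)
    hj hjB
  have hlower := hL.step_le_of_le_on hΔt hNT hlin hc (u := -u)
    (fun i hi => neg_le.mp (abs_le.mp (hbound i hi)).1) hj hjB
  rw [hlin.map_neg] at hlower
  simp only [Pi.neg_apply] at hlower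
  exact abs_le.mpr ⟨by linarith, hupper⟩

end SatisfiesDMP

theorem stmt_12_general (L : (ℤ → ℝ) → ℤ → ℝ) (Iin IB : Set ℤ)
    (Δx Δt C : ℝ) (NT : ℕ) (e ε : ℕ → ℤ → ℝ)
    (hΔt : 0 < Δt)
    (hlin : IsLinearMap ℝ L)
    (hDMP : ∀ (v f : ℕ → ℤ → ℝ) (M : ℝ),
      (∀ n < NT, ∀ i ∈ Iin, v (n + 1) i = v n i + Δt * (L (v n) i + f n i)) →
      (∀ n < NT, ∀ i ∈ Iin, f n i ≤ 0) →
      (∀ i : ℤ, v 0 i ≤ M) →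
      (∀ n ≤ NT, ∀ i ∈ IB, v n i ≤ M) →
      ∀ n ≤ NT, ∀ i ∈ Iin, v n i ≤ M)
    (hscheme : ∀ n < NT, ∀ i ∈ Iin, e (n + 1) i = e n i + Δt * (L (e n) i + ε n i))
    (hε : ∀ n < NT, ∀ i ∈ Iin, |ε n i| ≤ C * (Δx ^ 2 + Δt))
    (hinit : ∀ i : ℤ, e 0 i = 0)
    (hbdry : ∀ n ≤ NT, ∀ i ∈ IB, e n i = 0) :
    ∀ n ≤ NT, ∀ i ∈ Iin, |e n i| ≤ ((n:ℝ) * Δt) * (C * (Δx ^ 2 + Δt)) := by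
  have hL : SatisfiesDMP L Iin IB Δt NT := hDMP
  set K := C * (Δx ^ 2 + Δt)
  intro n
  induction n with
  | zero => simp [hinit]
  | succ m ih =>
    intro hm j hj
    have hK : 0 ≤ K := (abs_nonneg _).trans (hε m hm j hj)
    by_cases hjB : j ∈ IB
    · rw [hbdry _ hm j hjB, abs_zero]
      positivity
    have hstep : |e m j + Δt * L (e m) j| ≤ m * Δt * K := by
      rcases Nat.eq_zero_or_pos m with rfl | hm0
      · simp [show e 0 = 0 from funext hinit, hlin.map_zero]
      · exact hL.abs_step_le hΔt (by omega) hlin (by positivity) (ih (by omega))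
          (hbdry m (by omega)) hj hjB
    calc |e (m + 1) j| = |(e m j + Δt * L (e m) j) + Δt * ε m j| := by
          rw [hscheme m hm j hj]; ring_nf
      _ ≤ |e m j + Δt * L (e m) j| + Δt * |ε m j| := 
          (abs_add_le _ _).trans_eq (by rw [abs_mul, abs_of_pos hΔt])
      _ ≤ m * Δt * K + Δt * K := add_le_add hstep (mul_le_mul_of_nonneg_left (hε m hm j hj) hΔt.le)
      _ = ((m + 1 : ℕ) : ℝ) * Δt * K := by push_cast; ring

theorem stmt_12 (L : (ℤ → ℝ) → ℤ → ℝ) (Iin IB : Set ℤ)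
    (Δx Δt C : ℝ) (NT : ℕ) (e ε : ℕ → ℤ → ℝ)
    (hΔx : 0 < Δx) (hΔt : 0 < Δt) (hC : 0 ≤ C)
    (hlin : IsLinearMap ℝ L)
    (hCFL : Δt / Δx ^ 2 ≤ 1 / 4)
    (hDMP : ∀ (v f : ℕ → ℤ → ℝ) (M : ℝ),
      (∀ n < NT, ∀ i ∈ Iin, v (n + 1) i = v n i + Δt * (L (v n) i + f n i)) →
      (∀ n < NT, ∀ i ∈ Iin, f n i ≤ 0) →
      (∀ i : ℤ, v 0 i ≤ M) →
      (∀ n ≤ NT, ∀ i ∈ IB, v n i ≤ M) →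
      ∀ n ≤ NT, ∀ i ∈ Iin, v n i ≤ M)
    (hscheme : ∀ n < NT, ∀ i ∈ Iin, e (n + 1) i = e n i + Δt * (L (e n) i + ε n i))
    (hε : ∀ n < NT, ∀ i ∈ Iin, |ε n i| ≤ C * (Δx ^ 2 + Δt))
    (hinit : ∀ i : ℤ, e 0 i = 0)
    (hbdry : ∀ n ≤ NT, ∀ i ∈ IB, e n i = 0) :
    ∀ n ≤ NT, ∀ i ∈ Iin, |e n i| ≤ ((n:ℝ) * Δt) * (C * (Δx ^ 2 + Δt)) :=
  stmt_12_general L Iin IB Δx Δt C NT e ε hΔt hlin hDMP hscheme hε hinit hbdry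
end
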